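/- For ω ∈ F_n let n₄(ω) be the number of a ∈ {1, …, n−1} such that b̃_{a-1} = 1, b̃_a = 1, b_{a-1} ≠ 1, and b_a ≠ 1. Then for every ε > 0, the conditional probability μ( (1/9 − ε)·n < n₄ < (1/9 + ε)·n ∣ F_n ) tends to 1 as n → ∞. -/

import Mathlib

open MeasureTheory ProbabilityTheory Filter

/-- `μ` is the infinite product over `ℕ` of the uniform probability measure on
`{-1,0,1} ⊆ ℤ`, characterized by its values on cylinder sets.  (Taking `n = 0`
shows `μ` is a probability measure.) -/
def IsCDGProductMeasure (μ : Measure (ℕ → ℤ)) : Prop :=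
  ∀ (n : ℕ) (c : ℕ → ℤ),
    μ {ω : ℕ → ℤ | ∀ i < n, ω i = c i} =
      ∏ i ∈ Finset.range n,
        (if c i = -1 ∨ c i = 0 ∨ c i = 1 then (1 / 3 : ENNReal) else 0)

/-- `S n b = ∑_{i=0}^{n-1} 2^(n-1-i) b i`. -/
def cdgS (n : ℕ) (b : ℕ → ℤ) : ℤ := ∑ i ∈ Finset.range n, 2 ^ (n - 1 - i) * b i

/-- The standard form `b̃ a` of the sequence `b` for length `n`: the binary digit of
`S = ∑_{i<n} 2^(n-1-i) b i` in position `n-1-a`, so that (in the "first 1" case, where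
`1 ≤ S ≤ 2^n − 1`) one has `S = ∑_{a<n} 2^(n-1-a) b̃ a` with each `b̃ a ∈ {0,1}`. -/
def btilde (n : ℕ) (b : ℕ → ℤ) (a : ℕ) : ℕ := (cdgS n b).toNat / 2 ^ (n - 1 - a) % 2

/-- The "first 1" event `F_n` for length `n`: there is `j < n` with `b j = 1` and
`b k = 0` for all `k < j`. -/
def firstOne (n : ℕ) : Set (ℕ → ℤ) :=
  {b : ℕ → ℤ | ∃ j < n, b j = 1 ∧ ∀ k < j, b k = 0}

/-!
Write `D_a` for "`b̃_a = 1` and `b_a ≠ 1`". Comparing `S` with its binary expansion digit by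
digit, `D_a` holds iff `b_a` equals a value in `{-1, 0}` fixed by the sign of the tail
`∑_{i > a} 2^(n-1-i) b_i`. So whatever the other coordinates, exactly one of the three values of
`b_a` gives `D_a`. On the slice of `F_n` where the first `1` is at `j`, the coordinates after `j`
are free, and `n₄` counts the `a ∈ [j + 2, n)` with `D_{a-1} ∧ D_a`: each of these events has
probability `1/9` and two of them at distance `≥ 2` are independent. Hence on that slice `n₄`
has mean `(n - j - 2)/9` and variance `O(n)`, and Chebyshev's inequality handles the slices with
`j ≤ ε n`; the remaining slices have conditional probability `O(3^(-ε n))`.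
-/

open Finset

namespace SignedDigits

section UpdateClosed

variable {ι α : Type*} [DecidableEq ι]

def UpdateClosed (A : Finset (ι → α)) (V : Finset α) (c : ι) : Prop :=
  ∀ v ∈ A, v c ∈ V ∧ ∀ z ∈ V, Function.update v c z ∈ A

lemma UpdateClosed.filter {A : Finset (ι → α)} {V : Finset α} {c : ι} (hA : UpdateClosed A V c)
    {P : (ι → α) → Prop} [DecidablePred P] (hP : ∀ v z, P (Function.update v c z) ↔ P v) :
    UpdateClosed (A.filter P) V c := by
  intro v hv
  rw [mem_filter] at hv
  exact ⟨(hA v hv.1).1, fun z hz => mem_filter.2 ⟨(hA v hv.1).2 z hz, (hP v z).2 hv.2⟩⟩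

/-- `v ↦ (Function.update v c (g v), v c)` is a bijection from `A` onto
`{v ∈ A | v c = g v} ×ˢ V`. -/
theorem UpdateClosed.card_eq_card_filter_mul [DecidableEq α] {A : Finset (ι → α)}
    {V : Finset α} {c : ι} (hA : UpdateClosed A V c) {g : (ι → α) → α}
    (hgV : ∀ v ∈ A, g v ∈ V) (hg : ∀ v z, g (Function.update v c z) = g v) :
    #A = #(A.filter fun v => v c = g v) * #V := by
  rw [← card_product]
  refine card_nbij' (fun v => (Function.update v c (g v), v c))
    (fun p => Function.update p.1 c p.2) ?_ ?_ ?_ ?_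
  · intro v hv
    simp only [coe_product, coe_filter, Set.mem_prod, Set.mem_ofPred_eq, mem_coe] at hv ⊢
    exact ⟨⟨(hA v hv).2 _ (hgV v hv), by simp [hg]⟩, (hA v hv).1⟩
  · rintro ⟨w, z⟩ hw
    simp only [coe_product, coe_filter, Set.mem_prod, Set.mem_ofPred_eq, mem_coe] at hw ⊢
    exact (hA w hw.1.1).2 z hw.2
  · intro v _
    simp
  · rintro ⟨w, z⟩ hw
    simp only [coe_product, coe_filter, Set.mem_prod, Set.mem_ofPred_eq, mem_coe] at hw
    simp [hg, ← hw.1.2]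

end UpdateClosed

lemma sum_card_filter_comm {α : Type*} (s : Finset α) (I : Finset ℕ) (E : ℕ → α → Prop)
    [∀ a, DecidablePred (E a)] :
    ∑ v ∈ s, (#(I.filter fun a => E a v) : ℝ) = ∑ a ∈ I, (#(s.filter (E a)) : ℝ) := by
  simp_rw [natCast_card_filter]
  exact sum_comm

lemma sum_sq_card_filter_eq {α : Type*} (s : Finset α) (I : Finset ℕ) (E : ℕ → α → Prop)
    [∀ a, DecidablePred (E a)] :
    ∑ v ∈ s, (#(I.filter fun a => E a v) : ℝ) ^ 2 =
      ∑ a ∈ I, ∑ a' ∈ I, (#(s.filter fun v => E a v ∧ E a' v) : ℝ) := by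
  simp_rw [natCast_card_filter, sq, sum_mul_sum, ite_zero_mul_ite_zero, mul_one]
  rw [sum_comm]
  exact sum_congr rfl fun a _ => sum_comm

/-- Second moment bound for a sum of indicators of probability `p` that are independent at
distance `≥ 2`: each of the at most `3 |I|` remaining pairs contributes at most `p`. -/
theorem sum_sq_card_filter_sub_le {α : Type*} (s : Finset α) (I : Finset ℕ) (E : ℕ → α → Prop)
    [∀ a, DecidablePred (E a)] {p : ℝ}
    (h₁ : ∀ a ∈ I, (#(s.filter (E a)) : ℝ) = p * #s)
    (h₂ : ∀ a ∈ I, ∀ a' ∈ I, a + 2 ≤ a' →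
      (#(s.filter fun v => E a v ∧ E a' v) : ℝ) = p ^ 2 * #s) :
    ∑ v ∈ s, ((#(I.filter fun a => E a v) : ℝ) - p * #I) ^ 2 ≤ 3 * p * #I * #s := by
  set N : ℕ → ℕ → ℝ := fun a a' => #(s.filter fun v => E a v ∧ E a' v)
  have hsum : ∑ v ∈ s, (#(I.filter fun a => E a v) : ℝ) = p * #I * #s := by
    rw [sum_card_filter_comm, sum_congr rfl h₁, sum_const, nsmul_eq_mul]
    ring
  have hrow : ∀ a ∈ I, ∑ a' ∈ I, N a a' ≤ p ^ 2 * #I * #s + 3 * (p * #s) := by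
    intro a ha
    have hnear : #(I.filter fun a' => ¬(a + 2 ≤ a' ∨ a' + 2 ≤ a)) ≤ 3 := by
      refine (card_le_card fun a' ha' => ?_).trans (Nat.card_Icc (a - 1) (a + 1)).le |>.trans
        (by omega)
      simp only [mem_filter, mem_Icc] at ha' ⊢
      omega
    rw [← sum_filter_add_sum_filter_not I fun a' => a + 2 ≤ a' ∨ a' + 2 ≤ a]
    gcongr
    · refine (sum_le_card_nsmul _ _ (p ^ 2 * #s) fun a' ha' => ?_).trans ?_
      · obtain ⟨ha', hfar | hfar⟩ := mem_filter.1 ha'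
        · exact (h₂ a ha a' ha' hfar).le
        · rw [show N a a' = N a' a by simp only [N, and_comm]]
          exact (h₂ a' ha' a ha hfar).le
      · rw [nsmul_eq_mul, mul_comm, mul_right_comm]
        gcongr
        exact filter_subset _ _
    · refine (sum_le_card_nsmul _ _ (p * #s) fun a' _ => ?_).trans ?_
      · rw [← h₁ a ha]
        simp only [N]
        exact_mod_cast card_le_card (monotone_filter_right s (p := fun v => E a v ∧ E a' v)
          fun _ _ h => h.1)
      · rw [nsmul_eq_mul]
        gcongr
        · rw [← h₁ a ha]
          positivity
        · exact_mod_cast hnear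
  have hsq_le : ∑ v ∈ s, (#(I.filter fun a => E a v) : ℝ) ^ 2 ≤
      #I * (p ^ 2 * #I * #s + 3 * (p * #s)) := by
    rw [sum_sq_card_filter_eq, ← nsmul_eq_mul]
    exact sum_le_card_nsmul _ _ _ hrow
  have hexp : ∑ v ∈ s, ((#(I.filter fun a => E a v) : ℝ) - p * #I) ^ 2 =
      ∑ v ∈ s, (#(I.filter fun a => E a v) : ℝ) ^ 2 -
        2 * (∑ v ∈ s, (#(I.filter fun a => E a v) : ℝ)) * (p * #I) + #s * (p * #I) ^ 2 := by
    simp only [sub_sq, sum_add_distrib, sum_sub_distrib, sum_const, nsmul_eq_mul, ← sum_mul,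
      ← mul_sum]
  rw [hexp, hsum]
  nlinarith

theorem card_filter_le_abs_mul_sq_le_sum_sq {α : Type*} (s : Finset α) (f : α → ℝ) {r : ℝ}
    (hr : 0 ≤ r) :
    (#(s.filter fun v => r ≤ |f v|) : ℝ) * r ^ 2 ≤ ∑ v ∈ s, f v ^ 2 := by
  rw [← nsmul_eq_mul]
  refine (card_nsmul_le_sum _ _ _ fun v hv => ?_).trans
    (sum_le_sum_of_subset_of_nonneg (filter_subset _ _) fun _ _ _ => sq_nonneg _)
  rw [← sq_abs (f v)]
  exact pow_le_pow_left₀ hr (mem_filter.1 hv).2 2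

section Cube

def zeroExtend (n : ℕ) (v : Fin n → ℤ) : ℕ → ℤ := fun i => if h : i < n then v ⟨i, h⟩ else 0

lemma zeroExtend_injective (n : ℕ) : Function.Injective (zeroExtend n) := by
  intro v w h
  funext i
  simpa [zeroExtend] using congrFun h i

def cube (n : ℕ) : Finset (ℕ → ℤ) :=
  (Fintype.piFinset fun _ : Fin n => ({-1, 0, 1} : Finset ℤ)).map
    ⟨zeroExtend n, zeroExtend_injective n⟩

lemma mem_cube {n : ℕ} {v : ℕ → ℤ} :
    v ∈ cube n ↔ (∀ i < n, v i ∈ ({-1, 0, 1} : Finset ℤ)) ∧ ∀ i, n ≤ i → v i = 0 := by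
  constructor
  · intro hv
    obtain ⟨u, hu, rfl⟩ := mem_map.1 hv
    rw [Fintype.mem_piFinset] at hu
    refine ⟨fun i hi => ?_, fun i hi => ?_⟩ <;> simp [zeroExtend, hi, hu, not_lt.2]
  · rintro ⟨h, h0⟩
    refine mem_map.2 ⟨fun i => v i, Fintype.mem_piFinset.2 fun i => h i i.2, funext fun i => ?_⟩
    by_cases hi : i < n
    · simp [zeroExtend, hi]
    · simp [zeroExtend, hi, h0 i (not_lt.1 hi)]

lemma card_cube (n : ℕ) : #(cube n) = 3 ^ n := by
  simp [cube]

lemma abs_le_one_of_mem_cube {n : ℕ} {v : ℕ → ℤ} (hv : v ∈ cube n) : ∀ i < n, |v i| ≤ 1 := by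
  intro i hi
  have := (mem_cube.1 hv).1 i hi
  simp only [mem_insert, mem_singleton] at this
  rcases this with h | h | h <;> simp [h]

lemma eq_of_mem_cube {n : ℕ} {v w : ℕ → ℤ} (hv : v ∈ cube n) (hw : w ∈ cube n)
    (h : ∀ i < n, v i = w i) : v = w := by
  funext i
  by_cases hi : i < n
  · exact h i hi
  · rw [(mem_cube.1 hv).2 i (not_lt.1 hi), (mem_cube.1 hw).2 i (not_lt.1 hi)]

lemma updateClosed_cube {n c : ℕ} (hc : c < n) : UpdateClosed (cube n) {-1, 0, 1} c := by
  intro v hv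
  refine ⟨(mem_cube.1 hv).1 c hc, fun z hz => mem_cube.2 ⟨fun i hi => ?_, fun i hi => ?_⟩⟩
  · rcases eq_or_ne i c with rfl | h
    · simpa using hz
    · simpa [h] using (mem_cube.1 hv).1 i hi
  · simp [Function.update_of_ne (show i ≠ c by omega), (mem_cube.1 hv).2 i hi]

variable {μ : Measure (ℕ → ℤ)}

lemma measurableSet_setOf_of_dependsOn {n : ℕ} {P : (ℕ → ℤ) → Prop}
    (hP : DependsOn P (Set.Iio n)) : MeasurableSet {ω | P ω} := by
  have : {ω | P ω} = (fun ω (i : Fin n) => ω i) ⁻¹' {v | P (zeroExtend n v)} := by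
    ext ω
    exact Iff.of_eq (hP fun i hi => by simp [zeroExtend, show i < n from hi])
  rw [this]
  exact (measurable_pi_lambda _ fun i => measurable_pi_apply _) (MeasurableSet.of_discrete)

lemma isProbabilityMeasure_of_isCDGProductMeasure (hμ : IsCDGProductMeasure μ) :
    IsProbabilityMeasure μ :=
  ⟨by simpa using hμ 0 0⟩

lemma measure_cylinder_of_mem_cube (hμ : IsCDGProductMeasure μ) {n : ℕ} {v : ℕ → ℤ}
    (hv : v ∈ cube n) : μ {ω | ∀ i < n, ω i = v i} = 3⁻¹ ^ n := by
  rw [hμ, prod_congr rfl fun i hi => if_pos ?_, prod_const, card_range, one_div]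
  simpa using (mem_cube.1 hv).1 i (mem_range.1 hi)

/-- Up to a null set, the event is the disjoint union of the cylinders over its points in
`cube n`. -/
theorem measure_setOf_eq_card_mul (hμ : IsCDGProductMeasure μ) {n : ℕ}
    {P : (ℕ → ℤ) → Prop} [DecidablePred P] (hP : DependsOn P (Set.Iio n)) :
    μ {ω | P ω} = #((cube n).filter P) * 3⁻¹ ^ n := by
  have := isProbabilityMeasure_of_isCDGProductMeasure hμ
  set C : (ℕ → ℤ) → Set (ℕ → ℤ) := fun v => {ω | ∀ i < n, ω i = v i}
  have hC : ∀ v, MeasurableSet (C v) := fun v =>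
    measurableSet_setOf_of_dependsOn fun x y h => by
      simp only [eq_iff_iff]
      exact forall₂_congr fun i hi => by rw [h i hi]
  have hdisj : (cube n : Set (ℕ → ℤ)).PairwiseDisjoint C := by
    intro v hv w hw hvw
    refine Set.disjoint_left.2 fun ω hωv hωw => hvw (eq_of_mem_cube hv hw fun i hi => ?_)
    rw [← hωv i hi, hωw i hi]
  have hU : μ (⋃ v ∈ cube n, C v)ᶜ = 0 := by
    rw [prob_compl_eq_one_sub (Finset.measurableSet_biUnion _ fun v _ => hC v),
      measure_biUnion_finset hdisj fun v _ => hC v,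
      sum_congr rfl fun v hv => measure_cylinder_of_mem_cube hμ hv, sum_const, card_cube,
      nsmul_eq_mul, Nat.cast_pow, Nat.cast_ofNat, ← mul_pow,
      ENNReal.mul_inv_cancel (by norm_num) (by norm_num), one_pow, tsub_self]
  have hinter : {ω | P ω} ∩ ⋃ v ∈ cube n, C v = ⋃ v ∈ (cube n).filter P, C v := by
    ext ω
    simp only [Set.mem_inter_iff, Set.mem_iUnion, mem_filter, exists_prop]
    constructor
    · rintro ⟨hω, v, hv, hωv⟩
      exact ⟨v, ⟨hv, (Iff.of_eq (hP hωv)).1 hω⟩, hωv⟩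
    · rintro ⟨v, ⟨hv, hPv⟩, hωv⟩
      exact ⟨(Iff.of_eq (hP hωv)).2 hPv, v, hv, hωv⟩
  rw [← measure_inter_conull hU, hinter,
    measure_biUnion_finset (hdisj.subset (filter_subset _ _)) fun v _ => hC v,
    sum_congr rfl fun v hv => measure_cylinder_of_mem_cube hμ (mem_filter.1 hv).1, sum_const,
    nsmul_eq_mul]

end Cube

section Digits

def cdgTail (n s : ℕ) (b : ℕ → ℤ) : ℤ := ∑ i ∈ Ico s n, 2 ^ (n - 1 - i) * b i

variable {n s a j : ℕ} {b : ℕ → ℤ}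

lemma cdgS_eq_cdgTail_zero : cdgS n b = cdgTail n 0 b := by
  rw [cdgS, cdgTail, range_eq_Ico]

lemma cdgTail_eq_add (hs : s < n) :
    cdgTail n s b = 2 ^ (n - 1 - s) * b s + cdgTail n (s + 1) b :=
  sum_eq_sum_Ico_succ_bot hs _

lemma cdgTail_congr {b' : ℕ → ℤ} (h : ∀ i, s ≤ i → i < n → b i = b' i) :
    cdgTail n s b = cdgTail n s b' :=
  sum_congr rfl fun i hi => by rw [h i (mem_Ico.1 hi).1 (mem_Ico.1 hi).2]

lemma abs_cdgTail_lt (hb : ∀ i < n, |b i| ≤ 1) (hs : s ≤ n) : |cdgTail n s b| < 2 ^ (n - s) := by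
  induction hk : n - s generalizing s with
  | zero => simp [cdgTail, show s = n by omega]
  | succ k ih =>
    have hsn : s < n := by omega
    have hbs : |(2 : ℤ) ^ (n - 1 - s) * b s| ≤ 2 ^ k := by
      rw [abs_mul, abs_pow, abs_two, show n - 1 - s = k by omega]
      exact mul_le_of_le_one_right (by positivity) (hb s hsn)
    rw [cdgTail_eq_add hsn, pow_succ, mul_two]
    exact (abs_add_le _ _).trans_lt (add_lt_add_of_le_of_lt hbs (ih hsn (by omega)))

/-- The leading `1` outweighs all the later digits. -/
lemma one_le_cdgTail (hb : ∀ i < n, |b i| ≤ 1) (hsj : s ≤ j) (hj : j < n) (hbj : b j = 1)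
    (h0 : ∀ k, s ≤ k → k < j → b k = 0) : 1 ≤ cdgTail n s b := by
  have hzero : ∑ i ∈ Ico s j, 2 ^ (n - 1 - i) * b i = 0 :=
    sum_eq_zero fun i hi => by rw [h0 i (mem_Ico.1 hi).1 (mem_Ico.1 hi).2, mul_zero]
  have htail := abs_lt.1 (abs_cdgTail_lt hb (s := j + 1) hj)
  rw [cdgTail, ← sum_Ico_consecutive _ hsj hj.le, hzero, zero_add, ← cdgTail,
    cdgTail_eq_add hj, hbj, mul_one, show n - 1 - j = n - (j + 1) by omega]
  linarith

lemma exists_cdgS_eq (ha : a < n) :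
    ∃ q : ℤ, cdgS n b = cdgTail n (a + 1) b + (2 * q + b a) * 2 ^ (n - 1 - a) := by
  have hdvd : 2 ^ (n - 1 - a + 1) ∣ ∑ i ∈ range a, (2 : ℤ) ^ (n - 1 - i) * b i :=
    dvd_sum fun i hi => (pow_dvd_pow 2 (by have := mem_range.1 hi; omega)).mul_right _
  obtain ⟨q, hq⟩ := hdvd
  refine ⟨q, ?_⟩
  rw [cdgS, ← sum_range_add_sum_Ico _ ha.le, hq, ← cdgTail, cdgTail_eq_add ha]
  ring

/-- The value of `b a` for which the standard digit `b̃ a` is `1` although `b a ≠ 1`: it is `0`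
when the digits after `a` sum to a negative number (a borrow from position `a`), `-1` otherwise. -/
def hiddenOneDigit (n a : ℕ) (b : ℕ → ℤ) : ℤ := if cdgTail n (a + 1) b < 0 then 0 else -1

def IsHiddenOne (n a : ℕ) (b : ℕ → ℤ) : Prop := b a = hiddenOneDigit n a b

def IsHiddenPair (n a : ℕ) (b : ℕ → ℤ) : Prop := IsHiddenOne n (a - 1) b ∧ IsHiddenOne n a b

theorem btilde_eq_one_and_ne_one_iff (hb : ∀ i < n, |b i| ≤ 1) (hS : 0 ≤ cdgS n b)
    (ha : a < n) : btilde n b a = 1 ∧ b a ≠ 1 ↔ IsHiddenOne n a b := by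
  obtain ⟨q, hq⟩ := exists_cdgS_eq (b := b) ha
  set T := cdgTail n (a + 1) b
  have h2e : (0 : ℤ) < 2 ^ (n - 1 - a) := by positivity
  have hT := abs_lt.1 (abs_cdgTail_lt hb (s := a + 1) ha)
  rw [show n - (a + 1) = n - 1 - a by omega] at hT
  have hdiv : cdgS n b / 2 ^ (n - 1 - a) = 2 * q + b a + if T < 0 then -1 else 0 := by
    rw [hq, Int.add_mul_ediv_right _ _ h2e.ne', add_comm]
    congr 1
    split_ifs with hneg
    · rw [show T = (T + 2 ^ (n - 1 - a)) + (-1) * 2 ^ (n - 1 - a) by ring,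
        Int.add_mul_ediv_right _ _ h2e.ne', Int.ediv_eq_zero_of_lt (by linarith) (by linarith)]
      rfl
    · exact Int.ediv_eq_zero_of_lt (by linarith) hT.2
  have hbt : (btilde n b a : ℤ) = cdgS n b / 2 ^ (n - 1 - a) % 2 := by
    rw [btilde]
    push_cast [Int.natCast_ediv]
    rw [Int.toNat_of_nonneg hS]
  have hba := abs_le.1 (hb a ha)
  rw [IsHiddenOne, hiddenOneDigit, ← Nat.cast_inj (R := ℤ), hbt, hdiv]
  split_ifs <;> omega

instance (n a : ℕ) : DecidablePred (IsHiddenOne n a) := fun _ => Int.decEq _ _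

instance (n a : ℕ) : DecidablePred (IsHiddenPair n a) := fun _ => instDecidableAnd

end Digits

section Slices

def leadingZeros (n t : ℕ) : Finset (ℕ → ℤ) := (cube n).filter fun v => ∀ k < t, v k = 0

def firstOneSlice (n j : ℕ) : Finset (ℕ → ℤ) := (leadingZeros n j).filter fun v => v j = 1

variable {n t j a c : ℕ} {b : ℕ → ℤ} {z : ℤ}

lemma mem_firstOneSlice {v : ℕ → ℤ} :
    v ∈ firstOneSlice n j ↔ v ∈ cube n ∧ (∀ k < j, v k = 0) ∧ v j = 1 := by
  simp [firstOneSlice, leadingZeros, and_assoc]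

lemma lt_of_mem_firstOneSlice {v : ℕ → ℤ} (hv : v ∈ firstOneSlice n j) : j < n := by
  obtain ⟨hcube, -, hj⟩ := mem_firstOneSlice.1 hv
  by_contra h
  rw [(mem_cube.1 hcube).2 j (not_lt.1 h)] at hj
  exact zero_ne_one hj

lemma updateClosed_leadingZeros (htc : t ≤ c) (hc : c < n) :
    UpdateClosed (leadingZeros n t) {-1, 0, 1} c :=
  (updateClosed_cube hc).filter fun v z =>
    forall₂_congr fun k hk => by rw [Function.update_of_ne (by omega)]

lemma updateClosed_firstOneSlice (hjc : j < c) (hc : c < n) :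
    UpdateClosed (firstOneSlice n j) {-1, 0, 1} c :=
  (updateClosed_leadingZeros hjc.le hc).filter fun v z => by rw [Function.update_of_ne hjc.ne]

lemma card_leadingZeros_mul (ht : t ≤ n) : #(leadingZeros n t) * 3 ^ t = 3 ^ n := by
  induction t with
  | zero =>
    rw [leadingZeros, filter_true_of_mem fun v _ k hk => absurd hk (Nat.not_lt_zero k), card_cube,
      pow_zero, mul_one]
  | succ t ih =>
    have h := (updateClosed_leadingZeros le_rfl ht).card_eq_card_filter_mul (g := fun _ => 0)
      (by simp) fun _ _ => rfl
    rw [leadingZeros, filter_filter] at h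
    simp only [← Nat.forall_lt_succ_right] at h
    change #(leadingZeros n t) = #(leadingZeros n (t + 1)) * 3 at h
    rw [← ih (by omega), h, pow_succ]
    ring

lemma card_firstOneSlice_zero_mul (hn : 0 < n) : #(firstOneSlice n 0) * 3 = 3 ^ n := by
  have h := (updateClosed_leadingZeros (t := 0) le_rfl hn).card_eq_card_filter_mul
    (g := fun _ => 1) (by simp) fun _ _ => rfl
  rw [← card_leadingZeros_mul (t := 0) hn.le, pow_zero, mul_one, h]
  rfl

open Classical in
lemma firstOneSlice_subset (j : ℕ) : firstOneSlice n j ⊆ (cube n).filter (· ∈ firstOne n) := by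
  intro v hv
  obtain ⟨hcube, h0, hj⟩ := mem_firstOneSlice.1 hv
  exact mem_filter.2 ⟨hcube, j, lt_of_mem_firstOneSlice hv, hj, h0⟩

open Classical in
lemma sum_card_firstOneSlice_le (t : ℕ) :
    ∑ j ∈ range t, (#(firstOneSlice n j) : ℝ) ≤ #((cube n).filter (· ∈ firstOne n)) := by
  have hdisj : (range t : Set ℕ).PairwiseDisjoint (firstOneSlice n) := by
    intro i _ j _ hij
    refine disjoint_left.2 fun v hvi hvj => ?_
    obtain ⟨-, hi0, hi⟩ := mem_firstOneSlice.1 hvi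
    obtain ⟨-, hj0, hj⟩ := mem_firstOneSlice.1 hvj
    rcases hij.lt_or_gt with h | h
    · rw [hj0 i h] at hi; exact zero_ne_one hi
    · rw [hi0 j h] at hj; exact zero_ne_one hj
  rw [← Nat.cast_sum, ← card_biUnion hdisj]
  exact_mod_cast card_le_card (biUnion_subset.2 fun j _ => firstOneSlice_subset j)

open Classical in
lemma card_leadingZeros_le (hn : 0 < n) (htn : t ≤ n) :
    (#(leadingZeros n t) : ℝ) ≤ 3 * (1 / 3) ^ t * #((cube n).filter (· ∈ firstOne n)) := by
  have h1 : (#(leadingZeros n t) : ℝ) * 3 ^ t = #(firstOneSlice n 0) * 3 := by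
    exact_mod_cast (card_leadingZeros_mul htn).trans (card_firstOneSlice_zero_mul hn).symm
  rw [← eq_div_iff (by positivity)] at h1
  calc (#(leadingZeros n t) : ℝ) = 3 * (1 / 3) ^ t * #(firstOneSlice n 0) := by
        rw [h1, one_div_pow]
        ring
    _ ≤ _ := by
        gcongr
        exact firstOneSlice_subset 0

lemma hiddenOneDigit_update (hc : c ≤ a) :
    hiddenOneDigit n a (Function.update b c z) = hiddenOneDigit n a b := by
  rw [hiddenOneDigit, hiddenOneDigit,
    cdgTail_congr fun i hi _ => Function.update_of_ne (show i ≠ c by omega) z b]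

lemma isHiddenOne_update (hc : c < a) :
    IsHiddenOne n a (Function.update b c z) ↔ IsHiddenOne n a b := by
  rw [IsHiddenOne, IsHiddenOne, Function.update_of_ne hc.ne', hiddenOneDigit_update hc.le]

lemma isHiddenPair_update (hc : c + 1 < a) :
    IsHiddenPair n a (Function.update b c z) ↔ IsHiddenPair n a b :=
  and_congr (isHiddenOne_update (by omega)) (isHiddenOne_update (by omega))

lemma UpdateClosed.card_eq_card_filter_isHiddenOne_mul {A : Finset (ℕ → ℤ)}
    (hA : UpdateClosed A {-1, 0, 1} a) : #A = #(A.filter (IsHiddenOne n a)) * 3 :=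
  hA.card_eq_card_filter_mul (g := hiddenOneDigit n a)
    (fun v _ => by unfold hiddenOneDigit; split_ifs <;> simp)
    fun _ _ => hiddenOneDigit_update le_rfl

lemma UpdateClosed.card_eq_card_filter_isHiddenPair_mul {A : Finset (ℕ → ℤ)}
    (hA₁ : UpdateClosed A {-1, 0, 1} (a - 1)) (hA : UpdateClosed A {-1, 0, 1} a) (ha : 1 ≤ a) :
    #A = #(A.filter (IsHiddenPair n a)) * 9 := by
  have h := (hA₁.filter (P := IsHiddenOne n a) fun _ _ => isHiddenOne_update (by omega)
    ).card_eq_card_filter_isHiddenOne_mul (n := n)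
  rw [hA.card_eq_card_filter_isHiddenOne_mul (n := n), h, filter_filter, mul_assoc]
  congr 2
  exact filter_congr fun _ _ => and_comm

lemma card_firstOneSlice_eq_card_filter_isHiddenPair_mul (hja : j + 2 ≤ a) (han : a < n) :
    #(firstOneSlice n j) = #((firstOneSlice n j).filter (IsHiddenPair n a)) * 9 :=
  (updateClosed_firstOneSlice (by omega) (by omega)).card_eq_card_filter_isHiddenPair_mul
    (updateClosed_firstOneSlice (by omega) han) (by omega)

/-- Hidden pairs at distance at least two involve disjoint sets of free coordinates. -/
lemma card_firstOneSlice_eq_card_filter_isHiddenPair_and_mul {a' : ℕ} (hja : j + 2 ≤ a)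
    (haa' : a + 2 ≤ a') (han : a' < n) :
    #(firstOneSlice n j) =
      #((firstOneSlice n j).filter fun v => IsHiddenPair n a v ∧ IsHiddenPair n a' v) * 81 := by
  have hclosed : ∀ c, j < c → c + 1 < a' →
      UpdateClosed ((firstOneSlice n j).filter (IsHiddenPair n a')) {-1, 0, 1} c :=
    fun c hjc hca => (updateClosed_firstOneSlice hjc (by omega)).filter fun _ _ =>
      isHiddenPair_update hca
  rw [card_firstOneSlice_eq_card_filter_isHiddenPair_mul (by omega) han,
    (hclosed (a - 1) (by omega) (by omega)).card_eq_card_filter_isHiddenPair_mul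
      (hclosed a (by omega) (by omega)) (by omega), filter_filter, mul_assoc]
  congr 2
  exact filter_congr fun _ _ => and_comm

end Slices

section Typical

def cdgN4 (n : ℕ) (ω : ℕ → ℤ) : ℕ :=
  #((Ico 1 n).filter fun a =>
    btilde n ω (a - 1) = 1 ∧ btilde n ω a = 1 ∧ ω (a - 1) ≠ 1 ∧ ω a ≠ 1)

def IsTypical (n : ℕ) (ε : ℝ) (ω : ℕ → ℤ) : Prop :=
  (1 / 9 - ε) * n < (cdgN4 n ω : ℝ) ∧ (cdgN4 n ω : ℝ) < (1 / 9 + ε) * n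

noncomputable instance (n : ℕ) (ε : ℝ) : DecidablePred (IsTypical n ε) :=
  fun _ => instDecidableAnd

variable {n j a t : ℕ} {ε : ℝ} {v : ℕ → ℤ}

lemma not_isHiddenOne_of_mem_firstOneSlice (hv : v ∈ firstOneSlice n j) (ha : a ≤ j) :
    ¬IsHiddenOne n a v := by
  obtain ⟨hcube, h0, hj⟩ := mem_firstOneSlice.1 hv
  rw [IsHiddenOne, hiddenOneDigit]
  rcases ha.lt_or_eq with ha | rfl
  · have := one_le_cdgTail (abs_le_one_of_mem_cube hcube) (s := a + 1) ha
      (lt_of_mem_firstOneSlice hv) hj fun k _ hk => h0 k hk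
    rw [if_neg (by omega), h0 a ha]
    norm_num
  · rw [hj]
    split_ifs <;> norm_num

lemma cdgN4_eq_card_filter_isHiddenPair (hv : v ∈ firstOneSlice n j) :
    cdgN4 n v = #((Ico (j + 2) n).filter fun a => IsHiddenPair n a v) := by
  obtain ⟨hcube, h0, hj⟩ := mem_firstOneSlice.1 hv
  have hb := abs_le_one_of_mem_cube hcube
  have hS : 0 ≤ cdgS n v := by
    have := one_le_cdgTail hb (Nat.zero_le j) (lt_of_mem_firstOneSlice hv) hj fun k _ hk => h0 k hk
    rw [cdgS_eq_cdgTail_zero]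
    omega
  have hiff : ∀ a < n, btilde n v a = 1 ∧ v a ≠ 1 ↔ IsHiddenOne n a v :=
    fun a ha => btilde_eq_one_and_ne_one_iff hb hS ha
  rw [cdgN4]
  congr 1
  ext a
  simp only [mem_filter, mem_Ico]
  constructor
  · rintro ⟨⟨ha, han⟩, h₁, h₂, h₃, h₄⟩
    have hpair : IsHiddenPair n a v :=
      ⟨(hiff (a - 1) (by omega)).1 ⟨h₁, h₃⟩, (hiff a han).1 ⟨h₂, h₄⟩⟩
    refine ⟨⟨?_, han⟩, hpair⟩
    by_contra h
    exact not_isHiddenOne_of_mem_firstOneSlice hv (by omega) hpair.1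
  · rintro ⟨⟨hja, han⟩, hpair₁, hpair₂⟩
    obtain ⟨h₁, h₃⟩ := (hiff (a - 1) (by omega)).2 hpair₁
    obtain ⟨h₂, h₄⟩ := (hiff a han).2 hpair₂
    exact ⟨⟨by omega, han⟩, h₁, h₂, h₃, h₄⟩

/-- As `j + 2 ≤ ε n`, an atypical `n₄` deviates by at least `ε n / 2` from its mean
`#(Ico (j + 2) n) / 9` on the slice. -/
lemma card_filter_not_isTypical_firstOneSlice_mul_sq_le (hj : (j + 2 : ℝ) ≤ ε * n) :
    (#((firstOneSlice n j).filter fun v => ¬IsTypical n ε v) : ℝ) * (ε * n / 2) ^ 2 ≤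
      n / 3 * #(firstOneSlice n j) := by
  set s := firstOneSlice n j
  set I := Ico (j + 2) n
  have hI : (n : ℝ) ≤ #I + (j + 2) := by
    have : n ≤ #I + (j + 2) := by rw [Nat.card_Ico]; omega
    exact_mod_cast this
  have hIn : (#I : ℝ) ≤ n := by exact_mod_cast (Nat.card_Ico _ _).trans_le (Nat.sub_le _ _)
  have hvar := sum_sq_card_filter_sub_le s I (IsHiddenPair n) (p := 1 / 9)
    (fun a ha => by
      rw [card_firstOneSlice_eq_card_filter_isHiddenPair_mul (mem_Ico.1 ha).1 (mem_Ico.1 ha).2]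
      push_cast; ring)
    (fun a ha a' ha' haa' => by
      rw [card_firstOneSlice_eq_card_filter_isHiddenPair_and_mul (mem_Ico.1 ha).1 haa'
        (mem_Ico.1 ha').2]
      push_cast; ring)
  set dev : (ℕ → ℤ) → ℝ := fun v => #(I.filter fun a => IsHiddenPair n a v) - 1 / 9 * #I
  have hsub : s.filter (fun v => ¬IsTypical n ε v) ⊆ s.filter fun v => ε * n / 2 ≤ |dev v| := by
    intro v hv
    obtain ⟨hvs, hv⟩ := mem_filter.1 hv
    rw [IsTypical, cdgN4_eq_card_filter_isHiddenPair hvs, not_and_or, not_lt, not_lt] at hv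
    refine mem_filter.2 ⟨hvs, ?_⟩
    simp only [dev]
    rcases hv with hv | hv
    · exact le_abs.2 (Or.inr (by linarith))
    · exact le_abs.2 (Or.inl (by linarith))
  calc (#(s.filter fun v => ¬IsTypical n ε v) : ℝ) * (ε * n / 2) ^ 2
      ≤ (#(s.filter fun v => ε * n / 2 ≤ |dev v|) : ℝ) * (ε * n / 2) ^ 2 := by gcongr
    _ ≤ ∑ v ∈ s, dev v ^ 2 := card_filter_le_abs_mul_sq_le_sum_sq _ _ (by linarith)
    _ ≤ 3 * (1 / 9) * #I * #s := hvar
    _ ≤ n / 3 * #s := by nlinarith [(Nat.cast_nonneg #s : (0 : ℝ) ≤ #s)]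

open Classical in
theorem card_filter_firstOne_not_isTypical_le (hε : 0 < ε) (hn : 0 < n) (htn : t ≤ n)
    (ht : ∀ j < t, (j + 2 : ℝ) ≤ ε * n) :
    (#((cube n).filter fun v => v ∈ firstOne n ∧ ¬IsTypical n ε v) : ℝ) ≤
      (4 / (3 * ε ^ 2 * n) + 3 * (1 / 3) ^ t) * #((cube n).filter (· ∈ firstOne n)) := by
  set F := (cube n).filter (· ∈ firstOne n)
  set Bad := fun j => (firstOneSlice n j).filter fun v => ¬IsTypical n ε v
  have hslice : ∀ j < t, (#(Bad j) : ℝ) ≤ 4 / (3 * ε ^ 2 * n) * #(firstOneSlice n j) := by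
    intro j hj
    have h := card_filter_not_isTypical_firstOneSlice_mul_sq_le (ht j hj)
    have hεn : 0 < ε * n := by linarith [ht j hj, (Nat.cast_nonneg j : (0 : ℝ) ≤ j)]
    rw [← le_div_iff₀ (by positivity)] at h
    refine h.trans (le_of_eq ?_)
    field_simp
    ring
  have hcover : (cube n).filter (fun v => v ∈ firstOne n ∧ ¬IsTypical n ε v) ⊆
      (range t).biUnion Bad ∪ leadingZeros n t := by
    intro v hv
    obtain ⟨hcube, ⟨j, hjn, hj, h0⟩, hv⟩ := mem_filter.1 hv
    rcases lt_or_ge j t with hjt | hjt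
    · exact mem_union_left _ (mem_biUnion.2 ⟨j, mem_range.2 hjt,
        mem_filter.2 ⟨mem_firstOneSlice.2 ⟨hcube, h0, hj⟩, hv⟩⟩)
    · exact mem_union_right _ (mem_filter.2 ⟨hcube, fun k hk => h0 k (by omega)⟩)
  calc (#((cube n).filter fun v => v ∈ firstOne n ∧ ¬IsTypical n ε v) : ℝ)
      ≤ ∑ j ∈ range t, (#(Bad j) : ℝ) + #(leadingZeros n t) := by
        exact_mod_cast (card_le_card hcover).trans
          ((card_union_le _ _).trans (Nat.add_le_add_right card_biUnion_le _))
    _ ≤ ∑ j ∈ range t, 4 / (3 * ε ^ 2 * n) * #(firstOneSlice n j) + 3 * (1 / 3) ^ t * #F :=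
        add_le_add (sum_le_sum fun j hj => hslice j (mem_range.1 hj))
          (card_leadingZeros_le hn htn)
    _ ≤ _ := by
        rw [← mul_sum, add_mul]
        gcongr
        exact sum_card_firstOneSlice_le t

variable {μ : Measure (ℕ → ℤ)}

lemma dependsOn_mem_firstOne (n : ℕ) : DependsOn (· ∈ firstOne n) (Set.Iio n) := by
  intro x y h
  simp only [firstOne, Set.mem_ofPred_eq, eq_iff_iff]
  refine exists_congr fun j => and_congr_right fun hj => ?_
  rw [h j hj]
  exact and_congr_right fun _ => forall₂_congr fun k hk => by rw [h k (hk.trans hj)]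

lemma dependsOn_isTypical (n : ℕ) (ε : ℝ) : DependsOn (IsTypical n ε) (Set.Iio n) := by
  intro x y h
  have hS : cdgS n x = cdgS n y := by
    rw [cdgS_eq_cdgTail_zero, cdgS_eq_cdgTail_zero]
    exact cdgTail_congr fun i _ hi => h i hi
  have hb : btilde n x = btilde n y := funext fun a => by rw [btilde, btilde, hS]
  have hN : cdgN4 n x = cdgN4 n y := by
    rw [cdgN4, cdgN4, hb]
    refine congrArg card (filter_congr fun a ha => ?_)
    have ha := mem_Ico.1 ha
    rw [h a ha.2, h (a - 1) (show a - 1 < n by omega)]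
  rw [IsTypical, IsTypical, hN]

lemma measurableSet_firstOne (n : ℕ) : MeasurableSet (firstOne n) :=
  measurableSet_setOf_of_dependsOn (dependsOn_mem_firstOne n)

open Classical in
lemma measure_firstOne_ne_zero (hμ : IsCDGProductMeasure μ) (hn : 0 < n) :
    μ (firstOne n) ≠ 0 := by
  rw [← Set.ofPred_mem_eq (s := firstOne n),
    measure_setOf_eq_card_mul hμ (dependsOn_mem_firstOne n)]
  refine mul_ne_zero (Nat.cast_ne_zero.2 ?_) (pow_ne_zero _ (by norm_num))
  have h₁ := card_firstOneSlice_zero_mul hn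
  have h₂ := card_le_card (firstOneSlice_subset (n := n) 0)
  have : 0 < 3 ^ n := by positivity
  omega

open Classical in
lemma cond_compl_setOf_isTypical_le (hμ : IsCDGProductMeasure μ) (hε : 0 < ε) (hn : 0 < n)
    (htn : t ≤ n) (ht : ∀ j < t, (j + 2 : ℝ) ≤ ε * n) :
    μ[|firstOne n] {ω | IsTypical n ε ω}ᶜ ≤
      ENNReal.ofReal (4 / (3 * ε ^ 2 * n) + 3 * (1 / 3) ^ t) := by
  have := isProbabilityMeasure_of_isCDGProductMeasure hμ
  rw [cond_apply (measurableSet_firstOne n),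
    ENNReal.inv_mul_le_iff (measure_firstOne_ne_zero hμ hn) (measure_ne_top _ _)]
  have hB := measure_setOf_eq_card_mul hμ (P := fun ω => ω ∈ firstOne n ∧ ¬IsTypical n ε ω)
    fun x y h => by
      have h₁ : (x ∈ firstOne n) = (y ∈ firstOne n) := dependsOn_mem_firstOne n h
      have h₂ : IsTypical n ε x = IsTypical n ε y := dependsOn_isTypical n ε h
      beta_reduce
      rw [h₁, h₂]
  rw [← Set.ofPred_mem_eq (s := firstOne n),
    measure_setOf_eq_card_mul hμ (dependsOn_mem_firstOne n)]
  change μ {ω | ω ∈ firstOne n ∧ ¬IsTypical n ε ω} ≤ _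
  have hcard : (#((cube n).filter fun ω => ω ∈ firstOne n ∧ ¬IsTypical n ε ω) : ENNReal) ≤
      #((cube n).filter (· ∈ firstOne n)) *
        ENNReal.ofReal (4 / (3 * ε ^ 2 * n) + 3 * (1 / 3) ^ t) := by
    rw [← ENNReal.ofReal_natCast, ← ENNReal.ofReal_natCast, mul_comm,
      ← ENNReal.ofReal_mul (by positivity)]
    exact ENNReal.ofReal_le_ofReal (card_filter_firstOne_not_isTypical_le hε hn htn ht)
  rw [hB, mul_right_comm]
  exact mul_le_mul_left hcard _

lemma cond_setOf_isTypical_eq (hμ : IsCDGProductMeasure μ) (hn : 0 < n) :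
    μ[|firstOne n] {ω | IsTypical n ε ω} = 1 - μ[|firstOne n] {ω | IsTypical n ε ω}ᶜ := by
  have := isProbabilityMeasure_of_isCDGProductMeasure hμ
  have := cond_isProbabilityMeasure (measure_firstOne_ne_zero hμ hn)
  rw [← prob_compl_eq_one_sub (measurableSet_setOf_of_dependsOn (dependsOn_isTypical n ε)).compl,
    compl_compl]

end Typical

end SignedDigits

open SignedDigits

/-- with `n₄(ω)` the number of `a ∈ {1,…,n−1}` with `b̃_{a-1} = 1`, `b̃_a = 1`, `b_{a-1} ≠ 1`, `b_a ≠ 1`, for every `ε > 0` the conditional probability `μ((1/9 − ε)n < n₄ < (1/9 + ε)n ∣ F_n) → 1` as `n → ∞`. -/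
theorem stmt_8 (μ : Measure (ℕ → ℤ)) (hμ : IsCDGProductMeasure μ) (ε : ℝ) (hε : 0 < ε) :
    Tendsto (fun n : ℕ =>
      μ[|firstOne n] {ω : ℕ → ℤ |
        (1 / 9 - ε) * n <
          (((Finset.Ico 1 n).filter (fun a =>
            btilde n ω (a - 1) = 1 ∧ btilde n ω a = 1 ∧ ω (a - 1) ≠ 1 ∧ ω a ≠ 1)).card : ℝ) ∧
        (((Finset.Ico 1 n).filter (fun a =>
            btilde n ω (a - 1) = 1 ∧ btilde n ω a = 1 ∧ ω (a - 1) ≠ 1 ∧ ω a ≠ 1)).card : ℝ) <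
          (1 / 9 + ε) * n})
      atTop (nhds 1) := by
  set t : ℕ → ℕ := fun n => min (⌊ε * n⌋₊ - 1) n
  have ht : ∀ n, ∀ j < t n, (j + 2 : ℝ) ≤ ε * n := fun n j hj => by
    have : j + 2 ≤ ⌊ε * n⌋₊ := by have := hj.trans_le (min_le_left _ _); omega
    calc (j + 2 : ℝ) = ((j + 2 : ℕ) : ℝ) := by push_cast; rfl
      _ ≤ ⌊ε * n⌋₊ := Nat.cast_le.2 this
      _ ≤ ε * n := Nat.floor_le (by positivity)
  have hδ : Tendsto (fun n : ℕ => 4 / (3 * ε ^ 2 * n) + 3 * (1 / 3 : ℝ) ^ t n) atTop (nhds 0) := by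
    have htop : Tendsto t atTop atTop := tendsto_inf_atTop _
      ((tendsto_sub_atTop_nat 1).comp (tendsto_nat_floor_atTop.comp
        (tendsto_natCast_atTop_atTop.const_mul_atTop hε))) tendsto_id
    simpa using ((tendsto_const_div_atTop_nhds_zero_nat (4 / (3 * ε ^ 2) : ℝ)).congr
      fun n => div_div _ _ _).add
      (((tendsto_pow_atTop_nhds_zero_of_lt_one (r := (1 / 3 : ℝ)) (by norm_num)
        (by norm_num)).comp htop).const_mul 3)
  have hatypical : Tendsto (fun n => μ[|firstOne n] {ω | IsTypical n ε ω}ᶜ) atTop (nhds 0) :=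
    tendsto_of_tendsto_of_tendsto_of_le_of_le' tendsto_const_nhds
      (ENNReal.ofReal_zero ▸ ENNReal.tendsto_ofReal hδ) (Eventually.of_forall fun _ => zero_le)
      ((eventually_gt_atTop 0).mono fun n hn =>
        cond_compl_setOf_isTypical_le hμ hε hn (min_le_right _ _) (ht n))
  have := ENNReal.Tendsto.sub tendsto_const_nhds hatypical (Or.inl ENNReal.one_ne_top)
  rw [tsub_zero] at this
  exact this.congr' ((eventually_gt_atTop 0).mono fun n hn => (cond_setOf_isTypical_eq hμ hn).symm)
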